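/- Let w : ℝ → ℝ^n be differentiable with w'(t) = χ(P^u(t) − I)w(t), where for each t the matrix P^u(t) is left stochastic. Then ∑_i w_i(t) is constant in time, and if w(0) has nonnegative entries then w(t) has nonnegative entries for all t ≥ 0. -/

import Mathlib

/-!
The total mass is conserved because the columns of `P^u(t) - I` sum to zero, i.e.
`1ᵀ (P^u(t) - I) = 0`. For nonnegativity, `A(t) = χ (P^u(t) - I)` is Metzler with row sums at
most `χ n` (entries of a column-stochastic matrix are at most `1`). Perturb `w` by the barrier
`ε e^{(χ n + 1) t}` in every coordinate: at the first time some coordinate of the perturbed curve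
would hit `0`, the Metzler structure makes its derivative strictly positive, so it never leaves
the orthant; then let `ε → 0`.
-/

open Finset Filter Topology Matrix

lemma HasDerivAt.eventually_gt_of_deriv_pos {f : ℝ → ℝ} {f' x : ℝ} (hf : HasDerivAt f f' x)
    (hf' : 0 < f') : ∀ᶠ z in 𝓝[>] x, f x < f z := by
  filter_upwards [(hasDerivAt_iff_tendsto_slope_left_right.1 hf).2.eventually (lt_mem_nhds hf'),
    self_mem_nhdsWithin] with z hslope (hz : x < z)
  rw [slope_def_field, div_pos_iff_of_pos_right (sub_pos.2 hz)] at hslope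
  exact sub_pos.1 hslope

theorem nonneg_of_hasDerivAt_pos_of_eq_zero {ι : Type*} [Finite ι] {f f' : ℝ → ι → ℝ} {a : ℝ}
    (hf : ∀ t i, HasDerivAt (fun s => f s i) (f' t i) t) (ha : 0 ≤ f a)
    (hboundary : ∀ t ≥ a, 0 ≤ f t → ∀ i, f t i = 0 → 0 < f' t i) :
    ∀ t ≥ a, 0 ≤ f t := by
  intro b hab
  have hcont : Continuous f :=
    continuous_pi fun i => continuous_iff_continuousAt.2 fun t => (hf t i).continuousAt
  have hclosed : IsClosed ({t | 0 ≤ f t} ∩ Set.Icc a b) :=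
    (isClosed_le continuous_const hcont).inter isClosed_Icc
  refine hclosed.Icc_subset_of_forall_mem_nhdsWithin ha (fun x ⟨hx, hxab⟩ => ?_) ⟨hab, le_rfl⟩
  refine eventually_all.2 fun i => ?_
  rcases (hx i).eq_or_lt with hzero | hpos
  · filter_upwards [(hf x i).eventually_gt_of_deriv_pos (hboundary x hxab.1 hx i hzero.symm)]
      with z hz
    exact hzero.trans_le hz.le
  · exact nhdsWithin_le_nhds <| ((hf x i).continuousAt.eventually (lt_mem_nhds hpos)).mono
      fun z hz => hz.le

lemma Matrix.mul_sum_le_mulVec_apply {ι : Type*} [Fintype ι] {A : Matrix ι ι ℝ}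
    (hA : ∀ i j, i ≠ j → 0 ≤ A i j) {v : ι → ℝ} {c : ℝ} (hv : ∀ j, c ≤ v j) {i : ι}
    (hi : v i = c) : c * ∑ j, A i j ≤ (A *ᵥ v) i := by
  rw [mul_sum, mulVec, dotProduct]
  refine sum_le_sum fun j _ => ?_
  rcases eq_or_ne i j with rfl | hij
  · rw [hi, mul_comm]
  · rw [mul_comm]
    exact mul_le_mul_of_nonneg_left (hv j) (hA i j hij)

theorem nonneg_of_hasDerivAt_mulVec_of_metzler {ι : Type*} [Fintype ι] {A : ℝ → Matrix ι ι ℝ}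
    {C t₀ : ℝ} (hA : ∀ t i j, i ≠ j → 0 ≤ A t i j) (hC : ∀ t i, ∑ j, A t i j ≤ C)
    {w : ℝ → ι → ℝ} (hw : ∀ t i, HasDerivAt (fun s => w s i) ((A t *ᵥ w t) i) t)
    (h0 : 0 ≤ w t₀) : ∀ t ≥ t₀, 0 ≤ w t := by
  -- The barrier `ε e^{(C+1)t}` grows faster than the worst-case decay `C` of a vanishing coordinate.
  have hperturbed : ∀ ε > 0, ∀ t ≥ t₀, ∀ i, 0 ≤ w t i + ε * Real.exp ((C + 1) * t) := by
    intro ε hε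
    have hbarrier : ∀ t, HasDerivAt (fun s => ε * Real.exp ((C + 1) * s))
        (ε * (Real.exp ((C + 1) * t) * (C + 1))) t := fun t =>
      (((hasDerivAt_id t).const_mul (C + 1)).exp.congr_deriv (by simp [mul_comm])).const_mul ε
    refine nonneg_of_hasDerivAt_pos_of_eq_zero (fun t i => (hw t i).add (hbarrier t))
      (fun i => add_nonneg (h0 i) (by positivity)) fun t _ ht i hti => ?_
    set E := ε * Real.exp ((C + 1) * t)
    have hE : 0 < E := by positivity
    have hlower := (A t).mul_sum_le_mulVec_apply (hA t) (v := w t) (c := -E) (i := i)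
      (fun j => by linarith [show 0 ≤ w t j + E from ht j]) (by linarith)
    nlinarith [hC t i]
  intro t ht i
  refine le_of_forall_pos_le_add fun δ hδ => ?_
  have := hperturbed (δ / Real.exp ((C + 1) * t)) (by positivity) t ht i
  rwa [div_mul_cancel₀ _ (Real.exp_pos _).ne'] at this

theorem sum_eq_of_hasDerivAt_mulVec {ι : Type*} [Fintype ι] {A : ℝ → Matrix ι ι ℝ}
    (hA : ∀ t, 1 ᵥ* A t = 0) {w : ℝ → ι → ℝ}
    (hw : ∀ t i, HasDerivAt (fun s => w s i) ((A t *ᵥ w t) i) t) (t s : ℝ) :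
    ∑ i, w t i = ∑ i, w s i := by
  have hsum : ∀ t, HasDerivAt (fun s => ∑ i, w s i) 0 t := fun t => by
    have h := HasDerivAt.fun_sum (u := univ) fun i _ => hw t i
    rwa [← one_dotProduct, dotProduct_mulVec, hA, zero_dotProduct] at h
  exact is_const_of_deriv_eq_zero (fun t => (hsum t).differentiableAt)
    (fun t => (hsum t).deriv) t s

theorem stmt_19_general (n : ℕ) (χ : ℝ) (hχ : 0 ≤ χ)
    (Pu : ℝ → Matrix (Fin n) (Fin n) ℝ)
    (hPu0 : ∀ t i j, 0 ≤ Pu t i j)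
    (hPucol : ∀ t j, ∑ i, Pu t i j = 1)
    (w : ℝ → Fin n → ℝ)
    (hderiv : ∀ t i, HasDerivAt (fun s => w s i)
      (χ * (((Pu t).mulVec (w t)) i - w t i)) t) :
    (∀ t, ∑ i, w t i = ∑ i, w 0 i) ∧
      ((∀ i, 0 ≤ w 0 i) → ∀ t ≥ 0, ∀ i, 0 ≤ w t i) := by
  have hP : ∀ t, Pu t ∈ colStochastic ℝ (Fin n) := fun t =>
    mem_colStochastic_iff_sum.2 ⟨hPu0 t, hPucol t⟩
  set A : ℝ → Matrix (Fin n) (Fin n) ℝ := fun t => χ • (Pu t - 1)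
  have hw : ∀ t i, HasDerivAt (fun s => w s i) ((A t *ᵥ w t) i) t := fun t i => by
    simpa [A, smul_mulVec, sub_mulVec] using hderiv t i
  have hA_vecMul : ∀ t, 1 ᵥ* A t = 0 := fun t => by
    simp [A, vecMul_smul, vecMul_sub, one_vecMul_of_mem_colStochastic (hP t)]
  have hA_offDiag : ∀ t i j, i ≠ j → 0 ≤ A t i j := fun t i j hij => by
    simpa [A, one_apply_ne hij] using mul_nonneg hχ (hPu0 t i j)
  have hA_le : ∀ t i j, A t i j ≤ χ := fun t i j => by
    have hP_le : Pu t i j ≤ 1 := le_one_of_mem_colStochastic (hP t)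
    have hone := zero_le_one_elem (α := ℝ) i j
    simpa [A] using mul_le_mul_of_nonneg_left (by linarith : Pu t i j - _ ≤ 1) hχ
  have hA_rowSum : ∀ t i, ∑ j, A t i j ≤ n * χ := fun t i =>
    (sum_le_sum fun j _ => hA_le t i j).trans (by simp)
  exact ⟨fun t => sum_eq_of_hasDerivAt_mulVec hA_vecMul hw t 0,
    fun h0 t ht => nonneg_of_hasDerivAt_mulVec_of_metzler hA_offDiag hA_rowSum hw h0 t ht⟩

theorem stmt_19 (n : ℕ) (χ : ℝ) (hχ : 0 ≤ χ)
    (Pu : ℝ → Matrix (Fin n) (Fin n) ℝ)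
    (hcont : ∀ i j, Continuous fun t => Pu t i j)
    (hPu0 : ∀ t i j, 0 ≤ Pu t i j)
    (hPucol : ∀ t j, ∑ i, Pu t i j = 1)
    (w : ℝ → Fin n → ℝ)
    (hderiv : ∀ t i, HasDerivAt (fun s => w s i)
      (χ * (((Pu t).mulVec (w t)) i - w t i)) t) :
    (∀ t, ∑ i, w t i = ∑ i, w 0 i) ∧
      ((∀ i, 0 ≤ w 0 i) → ∀ t ≥ 0, ∀ i, 0 ≤ w t i) :=
  stmt_19_general n χ hχ Pu hPu0 hPucol w hderiv
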